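/- arXiv:math/9405201 — 2 statements merged into one kernel-verified Lean document; each statement's English description precedes it below -/
import Mathlib

section
/- Let 0 < r < 1 and 0 < a < 1/(2^{1/r} + 2). If A ⊆ [0,a] and B ⊆ [1−a, 1], then H^r(A ∪ B) = H^r(A) + H^r(B). -/
open MeasureTheory Set ENNReal

/-- The `r`-Hausdorff capacity of a set `X ⊆ ℝ`: the infimum of `∑ λ(I i)^r`
over all countable covers of `X` by closed intervals. -/
noncomputable def Hcap (r : ℝ) (X : Set ℝ) : ℝ≥0∞ :=
  ⨅ (I : ℕ → Set ℝ) (_ : ∀ i, ∃ a b : ℝ, I i = Set.Icc a b) (_ : X ⊆ ⋃ i, I i),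
    ∑' i, (volume (I i)) ^ r

/-!
Covers of `A` and of `B` interleave into a cover of `A ∪ B`, which gives `≤`. Conversely, split
each interval `I` of a cover of `A ∪ B`: if it reaches both `[0, a]` and `[1 - a, 1]`, replace it by
these two intervals, which is cheaper since `λ(I)^r ≥ (1 - 2a)^r ≥ 2 a^r`; otherwise give it to
the one of `A`, `B` it can meet.
-/

section

variable {r : ℝ} {X Y : Set ℝ}

lemma Hcap_le_tsum (I : ℕ → Set ℝ) (hI : ∀ i, ∃ a b : ℝ, I i = Icc a b) (hX : X ⊆ ⋃ i, I i) :
    Hcap r X ≤ ∑' i, volume (I i) ^ r :=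
  iInf₂_le_of_le I hI (iInf_le _ hX)

lemma Hcap_union_le : Hcap r (X ∪ Y) ≤ Hcap r X + Hcap r Y := by
  simp only [Hcap, ENNReal.iInf_add, ENNReal.add_iInf, le_iInf_iff]
  intro K hK hYK J hJ hXJ
  let I : ℕ → Set ℝ := Sum.elim J K ∘ Equiv.natSumNatEquivNat.symm
  have hI : ∀ i, ∃ a b : ℝ, I i = Icc a b := fun i =>
    (Sum.rec hJ hK : ∀ s, ∃ a b : ℝ, Sum.elim J K s = Icc a b) _
  have hcover : X ∪ Y ⊆ ⋃ i, I i := by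
    rintro x (hx | hx)
    · obtain ⟨j, hj⟩ := mem_iUnion.mp (hXJ hx)
      exact mem_iUnion.mpr ⟨Equiv.natSumNatEquivNat (.inl j), by simpa [I] using hj⟩
    · obtain ⟨k, hk⟩ := mem_iUnion.mp (hYK hx)
      exact mem_iUnion.mpr ⟨Equiv.natSumNatEquivNat (.inr k), by simpa [I] using hk⟩
  calc Hcap r (X ∪ Y) ≤ ∑' i, volume (I i) ^ r := Hcap_le_tsum I hI hcover
    _ = ∑' s, volume (Sum.elim J K s) ^ r :=
      Equiv.natSumNatEquivNat.symm.tsum_eq fun s => volume (Sum.elim J K s) ^ r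
    _ = ∑' j, volume (J j) ^ r + ∑' k, volume (K k) ^ r :=
      ENNReal.summable.tsum_sum ENNReal.summable

variable {x₁ x₂ y₁ y₂ : ℝ}

lemma exists_Icc_split (hr : 0 < r)
    (hgap : volume (Icc x₁ x₂) ^ r + volume (Icc y₁ y₂) ^ r ≤ volume (Icc x₂ y₁) ^ r) (b e : ℝ) :
    ∃ J K : Set ℝ, (∃ p q : ℝ, J = Icc p q) ∧ (∃ p q : ℝ, K = Icc p q) ∧
      Icc b e ∩ Icc x₁ x₂ ⊆ J ∧ Icc b e ∩ Icc y₁ y₂ ⊆ K ∧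
      volume J ^ r + volume K ^ r ≤ volume (Icc b e) ^ r := by
  have hempty : ∃ p q : ℝ, (∅ : Set ℝ) = Icc p q := ⟨1, 0, (Icc_eq_empty one_pos.not_ge).symm⟩
  have hzero : volume (∅ : Set ℝ) ^ r = 0 := by simp [hr]
  by_cases hb : b ≤ x₂
  · by_cases he : y₁ ≤ e
    · refine ⟨Icc x₁ x₂, Icc y₁ y₂, ⟨_, _, rfl⟩, ⟨_, _, rfl⟩, inter_subset_right,
        inter_subset_right, hgap.trans ?_⟩
      exact ENNReal.rpow_le_rpow (measure_mono (Icc_subset_Icc hb he)) hr.le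
    · refine ⟨Icc b e, ∅, ⟨_, _, rfl⟩, hempty, inter_subset_left, ?_, by rw [hzero, add_zero]⟩
      rintro x ⟨hxI, hxY⟩
      exact (he (hxY.1.trans hxI.2)).elim
  · refine ⟨∅, Icc b e, hempty, ⟨_, _, rfl⟩, ?_, inter_subset_left, by rw [hzero, zero_add]⟩
    rintro x ⟨hxI, hxX⟩
    exact (hb (hxI.1.trans hxX.2)).elim

lemma Hcap_add_le_Hcap_union (hr : 0 < r) (hX : X ⊆ Icc x₁ x₂) (hY : Y ⊆ Icc y₁ y₂)
    (hgap : volume (Icc x₁ x₂) ^ r + volume (Icc y₁ y₂) ^ r ≤ volume (Icc x₂ y₁) ^ r) :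
    Hcap r X + Hcap r Y ≤ Hcap r (X ∪ Y) := by
  refine le_iInf₂ fun I hI => le_iInf fun hcover => ?_
  choose b e hbe using hI
  choose J K hJ hK hXJ hYK hcost using fun i => exists_Icc_split hr hgap (b i) (e i)
  have hXcover : X ⊆ ⋃ i, J i := fun x hx => by
    obtain ⟨i, hi⟩ := mem_iUnion.mp (hcover (Or.inl hx))
    exact mem_iUnion.mpr ⟨i, hXJ i ⟨hbe i ▸ hi, hX hx⟩⟩
  have hYcover : Y ⊆ ⋃ i, K i := fun y hy => by
    obtain ⟨i, hi⟩ := mem_iUnion.mp (hcover (Or.inr hy))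
    exact mem_iUnion.mpr ⟨i, hYK i ⟨hbe i ▸ hi, hY hy⟩⟩
  calc Hcap r X + Hcap r Y ≤ ∑' i, volume (J i) ^ r + ∑' i, volume (K i) ^ r :=
        add_le_add (Hcap_le_tsum J hJ hXcover) (Hcap_le_tsum K hK hYcover)
    _ = ∑' i, (volume (J i) ^ r + volume (K i) ^ r) := ENNReal.tsum_add.symm
    _ ≤ ∑' i, volume (I i) ^ r := ENNReal.tsum_le_tsum fun i => by rw [hbe]; exact hcost i

end

lemma volume_Icc_rpow_add_volume_Icc_rpow_le_gap {r a : ℝ} (hr : 0 < r) (ha0 : 0 < a)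
    (ha : a < 1 / ((2 : ℝ) ^ (1 / r) + 2)) :
    volume (Icc 0 a) ^ r + volume (Icc (1 - a) 1) ^ r ≤ volume (Icc a (1 - a)) ^ r := by
  have hsep : (2 : ℝ) ^ (1 / r) * a ≤ 1 - 2 * a := by
    rw [lt_div_iff₀ (by positivity)] at ha
    linarith
  have hlen : 0 ≤ 1 - 2 * a := (by positivity : (0 : ℝ) ≤ 2 ^ (1 / r) * a).trans hsep
  have hpow : 2 * a ^ r ≤ (1 - 2 * a) ^ r :=
    calc 2 * a ^ r = ((2 : ℝ) ^ (1 / r) * a) ^ r := by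
          rw [Real.mul_rpow (by positivity) ha0.le, ← Real.rpow_mul zero_le_two,
            one_div_mul_cancel hr.ne', Real.rpow_one]
      _ ≤ (1 - 2 * a) ^ r := Real.rpow_le_rpow (by positivity) hsep hr.le
  rw [Real.volume_Icc, Real.volume_Icc, Real.volume_Icc, sub_zero, _root_.sub_sub_cancel,
    show 1 - a - a = 1 - 2 * a by ring, ENNReal.ofReal_rpow_of_nonneg ha0.le hr.le,
    ENNReal.ofReal_rpow_of_nonneg hlen hr.le, ← ENNReal.ofReal_add (by positivity)
    (by positivity)]
  exact ENNReal.ofReal_le_ofReal (by linarith)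

theorem hausdorff_capacity_additive_far_apart_general (r : ℝ) (hr0 : 0 < r)
    (a : ℝ) (ha0 : 0 < a) (ha : a < 1 / ((2 : ℝ) ^ (1 / r) + 2))
    (A B : Set ℝ) (hA : A ⊆ Set.Icc 0 a) (hB : B ⊆ Set.Icc (1 - a) 1) :
    Hcap r (A ∪ B) = Hcap r A + Hcap r B :=
  le_antisymm Hcap_union_le
    (Hcap_add_le_Hcap_union hr0 hA hB (volume_Icc_rpow_add_volume_Icc_rpow_le_gap hr0 ha0 ha))

theorem hausdorff_capacity_additive_far_apart (r : ℝ) (hr0 : 0 < r) (hr1 : r < 1)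
    (a : ℝ) (ha0 : 0 < a) (ha : a < 1 / ((2 : ℝ) ^ (1 / r) + 2))
    (A B : Set ℝ) (hA : A ⊆ Set.Icc 0 a) (hB : B ⊆ Set.Icc (1 - a) 1) :
    Hcap r (A ∪ B) = Hcap r A + Hcap r B :=
  hausdorff_capacity_additive_far_apart_general r hr0 a ha0 ha A B hA hB
end

section
/- Let K ⊆ [0,1] be closed (or just arbitrary) and fix i ∈ ℕ and μ > 0. Then there exist γ > 0 and a set K' ⊆ K with λ(K \ K') < μ such that Ξ_{1/(i+1), γ}(K', K') holds, i.e., for every Z with λ(Z) < γ, H^r(K' \ Z) > H^r(K') − 1/(i+1). -/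
open MeasureTheory Set ENNReal

/-- The relation `Ξ_{δ,ε}(X,Y)`: for every `Z` of Lebesgue (outer) measure less than `ε`,
`H^r(X ∩ Y \ Z) > H^r(Y) − δ` (phrased additively to avoid truncated subtraction). -/
def Xi (r δ ε : ℝ) (X Y : Set ℝ) : Prop :=
  ∀ Z : Set ℝ, volume Z < ENNReal.ofReal ε →
    Hcap r Y < Hcap r ((X ∩ Y) \ Z) + ENNReal.ofReal δ

/-!
If no subset `K'` of `K` were stable, one could repeatedly remove sets `Z` of measure small
enough to keep the total removed measure below `μ`, each time lowering the capacity by at least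
`δ`. After `n` steps the capacity of `K` would have dropped by `n δ`, which is impossible once
`n δ` exceeds the capacity of `K`, which is finite because `K` is bounded and `r > 0`.
-/

lemma Hcap_le_volume_Icc_rpow {r : ℝ} (hr : 0 < r) {X : Set ℝ} {a b : ℝ}
    (hX : X ⊆ Icc a b) : Hcap r X ≤ volume (Icc a b) ^ r := by
  let I : ℕ → Set ℝ := fun j => if j = 0 then Icc a b else Icc a a
  have hI : ∀ j, ∃ c d : ℝ, I j = Icc c d := fun j => by
    unfold I; split_ifs <;> exact ⟨_, _, rfl⟩
  have hcov : X ⊆ ⋃ j, I j := hX.trans (subset_iUnion I 0)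
  calc Hcap r X ≤ ∑' j, volume (I j) ^ r := iInf₂_le_of_le I hI (iInf_le _ hcov)
    _ = volume (Icc a b) ^ r := by
      rw [tsum_eq_single 0 fun j hj => by simp [I, hj, zero_rpow_of_pos hr]]
      rfl

section StableSubset

variable {α : Type*} [MeasurableSpace α] (ν : Measure α) (f : Set α → ℝ≥0∞)

lemma measure_diff_diff_le (K K' Z : Set α) : ν (K \ (K' \ Z)) ≤ ν (K \ K') + ν Z := by
  have hsub : K \ (K' \ Z) ⊆ (K \ K') ∪ Z := fun x ⟨hxK, hx⟩ => by
    by_cases hxK' : x ∈ K'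
    · exact Or.inr (not_not.1 fun hxZ => hx ⟨hxK', hxZ⟩)
    · exact Or.inl ⟨hxK, hxK'⟩
  exact (measure_mono hsub).trans (measure_union_le _ _)

lemma exists_subset_add_nat_mul_le_of_forall_unstable {K : Set α} {δ ε : ℝ≥0∞}
    (h : ∀ γ : ℝ, 0 < γ → ∀ K' ⊆ K, ν (K \ K') < ε →
      ∃ Z, ν Z < ENNReal.ofReal γ ∧ f (K' \ Z) + δ ≤ f K')
    (hε : 0 < ε) (n : ℕ) : ∃ K' ⊆ K, ν (K \ K') < ε ∧ f K' + n * δ ≤ f K := by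
  induction n with
  | zero => exact ⟨K, subset_rfl, by simpa using hε, by simp⟩
  | succ n ih =>
    obtain ⟨K', hK'K, hK'ε, hK'f⟩ := ih
    obtain ⟨γ, hγ, hγε⟩ := lt_iff_exists_add_pos_lt.1 hK'ε
    obtain ⟨Z, hZγ, hZf⟩ := h γ (by exact_mod_cast hγ) K' hK'K hK'ε
    refine ⟨K' \ Z, sdiff_subset.trans hK'K, ?_, ?_⟩
    · calc ν (K \ (K' \ Z)) ≤ ν (K \ K') + ν Z := measure_diff_diff_le ν K K' Z
        _ < ν (K \ K') + γ := by
          gcongr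
          · exact hK'ε.ne_top
          · simpa using hZγ
        _ < ε := hγε
    · calc f (K' \ Z) + (n + 1 : ℕ) * δ = f (K' \ Z) + δ + n * δ := by push_cast; ring
        _ ≤ f K' + n * δ := by gcongr
        _ ≤ f K := hK'f

lemma exists_stable_subset_of_ne_top {K : Set α} (hK : f K ≠ ⊤) {δ ε : ℝ≥0∞}
    (hδ : δ ≠ 0) (hε : 0 < ε) :
    ∃ γ : ℝ, 0 < γ ∧ ∃ K' ⊆ K, ν (K \ K') < ε ∧
      ∀ Z, ν Z < ENNReal.ofReal γ → f K' < f (K' \ Z) + δ := by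
  by_contra! h
  obtain ⟨n, hn⟩ := exists_nat_mul_gt hδ hK
  obtain ⟨K', -, -, hK'f⟩ := exists_subset_add_nat_mul_le_of_forall_unstable ν f h hε n
  exact (hn.trans_le (le_add_self.trans hK'f)).false

end StableSubset

theorem exists_stable_subset_single_general (r : ℝ) (hr0 : 0 < r)
    (K : Set ℝ) (hK : K ⊆ Set.Icc 0 1) (i : ℕ) (μ : ℝ) (hμ : 0 < μ) :
    ∃ γ > 0, ∃ K' : Set ℝ, K' ⊆ K ∧ volume (K \ K') < ENNReal.ofReal μ ∧
      Xi r (1 / (i + 1)) γ K' K' := by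
  have hKfin : Hcap r K ≠ ⊤ :=
    ((Hcap_le_volume_Icc_rpow hr0 hK).trans_lt
      (rpow_lt_top_of_nonneg hr0.le measure_Icc_lt_top.ne)).ne
  obtain ⟨γ, hγ, K', hK'K, hK'μ, hstable⟩ := exists_stable_subset_of_ne_top volume (Hcap r) hKfin
    (δ := ENNReal.ofReal (1 / (i + 1))) (by positivity) (ofReal_pos.2 hμ)
  exact ⟨γ, hγ, K', hK'K, hK'μ, fun Z hZ => by simpa only [inter_self] using hstable Z hZ⟩

theorem exists_stable_subset_single (r : ℝ) (hr0 : 0 < r) (hr1 : r < 1)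
    (K : Set ℝ) (hK : K ⊆ Set.Icc 0 1) (i : ℕ) (μ : ℝ) (hμ : 0 < μ) :
    ∃ γ > 0, ∃ K' : Set ℝ, K' ⊆ K ∧ volume (K \ K') < ENNReal.ofReal μ ∧
      Xi r (1 / (i + 1)) γ K' K' :=
  exists_stable_subset_single_general r hr0 K hK i μ hμ
end
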